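/- Let m, n be positive natural numbers, M : Fin m → Fin n → ℝ a payoff matrix, P and Q the standard simplices of ℝ^m and ℝ^n, and Γ : P × Q → P × Q the map Γ(p,q) = (p'(p,q), q'(p,q)) with p'_i(p,q) = (p_i + max(M(a_i,q) − M(p,q), 0)) / (1 + Σ_k max(M(a_k,q) − M(p,q), 0)) and q'_j(p,q) = (q_j + max(M(p,q) − M(p,b_j), 0)) / (1 + Σ_k max(M(p,q) − M(p,b_k), 0)). For a sequence ((p_n, q_n)) in P × Q, if max(M(a_i, q_n) − M(p_n, q_n), 0) → 0 for all i ∈ Fin m and max(M(p_n, q_n) − M(p_n, b_j), 0) → 0 for all j ∈ Fin n, then |Γ(p_n, q_n) − (p_n, q_n)| → 0; and conversely, if |Γ(p_n, q_n) − (p_n, q_n)| → 0 then max(M(a_i, q_n) − M(p_n, q_n), 0) → 0 for all i and max(M(p_n, q_n) − M(p_n, b_j), 0) → 0 for all j. -/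
import Mathlib


open Finset Filter Topology

/-- Expected payoff of player A at profile `(p, q)`. -/
noncomputable def expPayoff {m n : ℕ} (M : Fin m → Fin n → ℝ)
    (p : Fin m → ℝ) (q : Fin n → ℝ) : ℝ :=
  ∑ i, ∑ j, p i * M i j * q j

/-- Payoff `M(a_i, q)` of pure strategy `a_i` against mixed strategy `q`. -/
noncomputable def rowPayoff {m n : ℕ} (M : Fin m → Fin n → ℝ)
    (q : Fin n → ℝ) (i : Fin m) : ℝ :=
  ∑ j, M i j * q j

/-- Payoff `M(p, b_j)` of mixed strategy `p` against pure strategy `b_j`. -/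
noncomputable def colPayoff {m n : ℕ} (M : Fin m → Fin n → ℝ)
    (p : Fin m → ℝ) (j : Fin n) : ℝ :=
  ∑ i, p i * M i j

/-- First component `p'(p, q)` of the map `Γ`. -/
noncomputable def pNext {m n : ℕ} (M : Fin m → Fin n → ℝ)
    (p : Fin m → ℝ) (q : Fin n → ℝ) (i : Fin m) : ℝ :=
  (p i + max (rowPayoff M q i - expPayoff M p q) 0) /
    (1 + ∑ k, max (rowPayoff M q k - expPayoff M p q) 0)

/-- Second component `q'(p, q)` of the map `Γ`. -/
noncomputable def qNext {m n : ℕ} (M : Fin m → Fin n → ℝ)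
    (p : Fin m → ℝ) (q : Fin n → ℝ) (j : Fin n) : ℝ :=
  (q j + max (expPayoff M p q - colPayoff M p j) 0) /
    (1 + ∑ k, max (expPayoff M p q - colPayoff M p k) 0)

/-- The map `Γ(p,q) = (p'(p,q), q'(p,q))`. -/
noncomputable def Gamma {m n : ℕ} (M : Fin m → Fin n → ℝ)
    (x : (Fin m → ℝ) × (Fin n → ℝ)) : (Fin m → ℝ) × (Fin n → ℝ) :=
  (pNext M x.1 x.2, qNext M x.1 x.2)

lemma expPayoff_eq {m n : ℕ} (M : Fin m → Fin n → ℝ) (p : Fin m → ℝ) (q : Fin n → ℝ) :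
    expPayoff M p q = ∑ i, p i * rowPayoff M q i := by
  unfold expPayoff rowPayoff
  refine Finset.sum_congr rfl fun i _ => ?_
  rw [Finset.mul_sum]
  exact Finset.sum_congr rfl fun j _ => by ring

lemma abs_rowPayoff_le {m n : ℕ} (M : Fin m → Fin n → ℝ) (q : Fin n → ℝ)
    (hq : q ∈ stdSimplex ℝ (Fin n)) (i : Fin m) :
    |rowPayoff M q i| ≤ ∑ i, ∑ j, |M i j| := by
  have h1 : |rowPayoff M q i| ≤ ∑ j, |M i j| := by
    calc |∑ j, M i j * q j| ≤ ∑ j, |M i j * q j| := Finset.abs_sum_le_sum_abs _ _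
    _ ≤ ∑ j, |M i j| := by
        refine Finset.sum_le_sum fun j _ => ?_
        rw [abs_mul, abs_of_nonneg (hq.1 j)]
        nlinarith [abs_nonneg (M i j), hq.1 j, single_le_sum (fun k (_ : k ∈ univ) => hq.1 k) (mem_univ j), hq.2]
  refine h1.trans (Finset.single_le_sum (f := fun i => ∑ j, |M i j|) (fun k _ => ?_) (mem_univ i))
  exact Finset.sum_nonneg fun j _ => abs_nonneg _

lemma abs_expPayoff_le {m n : ℕ} (M : Fin m → Fin n → ℝ) (p : Fin m → ℝ) (q : Fin n → ℝ)
    (hp : p ∈ stdSimplex ℝ (Fin m)) (hq : q ∈ stdSimplex ℝ (Fin n)) :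
    |expPayoff M p q| ≤ ∑ i, ∑ j, |M i j| := by
  rw [expPayoff_eq]
  calc |∑ i, p i * rowPayoff M q i| ≤ ∑ i, |p i * rowPayoff M q i| := Finset.abs_sum_le_sum_abs _ _
  _ ≤ ∑ i, p i * (∑ i, ∑ j, |M i j|) := by
      refine Finset.sum_le_sum fun i _ => ?_
      rw [abs_mul, abs_of_nonneg (hp.1 i)]
      exact mul_le_mul_of_nonneg_left (abs_rowPayoff_le M q hq i) (hp.1 i)
  _ = ∑ i, ∑ j, |M i j| := by rw [← Finset.sum_mul, hp.2, one_mul]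

lemma sum_p_centered {m n : ℕ} (M : Fin m → Fin n → ℝ) (p : Fin m → ℝ) (q : Fin n → ℝ)
    (hp : ∑ i, p i = 1) :
    ∑ i, p i * (rowPayoff M q i - expPayoff M p q) = 0 := by
  simp_rw [mul_sub, Finset.sum_sub_distrib, ← Finset.sum_mul, hp, one_mul, ← expPayoff_eq,
    sub_self]

lemma pNext_sub {m n : ℕ} (M : Fin m → Fin n → ℝ) (p : Fin m → ℝ) (q : Fin n → ℝ) (i : Fin m) :
    pNext M p q i - p i =
      (max (rowPayoff M q i - expPayoff M p q) 0
        - p i * ∑ k, max (rowPayoff M q k - expPayoff M p q) 0) /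
      (1 + ∑ k, max (rowPayoff M q k - expPayoff M p q) 0) := by
  have hS : (0:ℝ) ≤ ∑ k, max (rowPayoff M q k - expPayoff M p q) 0 :=
    Finset.sum_nonneg fun k _ => le_max_right _ _
  have hS1 : (0:ℝ) < 1 + ∑ k, max (rowPayoff M q k - expPayoff M p q) 0 := by linarith
  unfold pNext
  field_simp
  ring

lemma fwd_aux (a S c : ℝ) (ha : 0 ≤ a) (hS : 0 ≤ S) (hc0 : 0 ≤ c) (hc1 : c ≤ 1) :
    |(a - c * S) / (1 + S)| ≤ a + S := by
  rw [abs_div, abs_of_pos (by linarith : (0:ℝ) < 1 + S), div_le_iff₀ (by linarith)]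
  have habs : |a - c * S| ≤ a + c * S := by
    refine abs_le.2 ⟨by nlinarith, by nlinarith⟩
  nlinarith [mul_nonneg hc0 hS]

lemma fwd_bound {m n : ℕ} (M : Fin m → Fin n → ℝ) (p : Fin m → ℝ) (q : Fin n → ℝ)
    (hp : p ∈ stdSimplex ℝ (Fin m)) (i : Fin m) :
    |pNext M p q i - p i| ≤ max (rowPayoff M q i - expPayoff M p q) 0
      + ∑ k, max (rowPayoff M q k - expPayoff M p q) 0 := by
  have hpi1 : p i ≤ 1 := by
    have := Finset.single_le_sum (f := p) (fun k (_ : k ∈ univ) => hp.1 k) (mem_univ i)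
    rw [hp.2] at this; exact this
  rw [pNext_sub]
  exact fwd_aux _ _ _ (le_max_right _ _)
    (Finset.sum_nonneg fun k _ => le_max_right _ _) (hp.1 i) hpi1

lemma key_identity {m n : ℕ} (M : Fin m → Fin n → ℝ) (p : Fin m → ℝ) (q : Fin n → ℝ)
    (hp : ∑ i, p i = 1) :
    ∑ i, (max (rowPayoff M q i - expPayoff M p q) 0)^2
      = (1 + ∑ k, max (rowPayoff M q k - expPayoff M p q) 0)
        * ∑ i, (pNext M p q i - p i) * (rowPayoff M q i - expPayoff M p q) := by
  set V := expPayoff M p q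
  set r : Fin m → ℝ := fun i => rowPayoff M q i
  set φ : Fin m → ℝ := fun k => max (r k - V) 0 with hφdef
  have hS : (0:ℝ) ≤ ∑ k, φ k := Finset.sum_nonneg fun k _ => le_max_right _ _
  have hS1 : (1 + ∑ k, φ k) ≠ 0 := by positivity
  have hdiff : ∀ i, pNext M p q i - p i = (φ i - p i * ∑ k, φ k) / (1 + ∑ k, φ k) :=
    fun i => pNext_sub M p q i
  have hsq : ∀ i, φ i * (r i - V) = (φ i)^2 := by
    intro i
    rcases le_or_gt (r i - V) 0 with h | h
    · simp [hφdef, max_eq_right h]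
    · rw [show φ i = r i - V from max_eq_left h.le]; ring
  calc ∑ i, (φ i)^2 = ∑ i, φ i * (r i - V) := by
        exact (Finset.sum_congr rfl fun i _ => (hsq i)).symm
  _ = ∑ i, (φ i - p i * ∑ k, φ k) * (r i - V) := by
        rw [show ∑ i, (φ i - p i * ∑ k, φ k) * (r i - V)
            = ∑ i, φ i * (r i - V) - (∑ k, φ k) * ∑ i, p i * (r i - V) from ?_]
        · rw [sum_p_centered M p q hp, mul_zero, sub_zero]
        · rw [Finset.mul_sum, ← Finset.sum_sub_distrib]
          exact Finset.sum_congr rfl fun i _ => by ring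
  _ = (1 + ∑ k, φ k) * ∑ i, (pNext M p q i - p i) * (r i - V) := by
        rw [Finset.mul_sum]
        refine Finset.sum_congr rfl fun i _ => ?_
        rw [hdiff i]
        field_simp

lemma bwd_bound {m n : ℕ} (M : Fin m → Fin n → ℝ) (p : Fin m → ℝ) (q : Fin n → ℝ)
    (hp : p ∈ stdSimplex ℝ (Fin m)) (hq : q ∈ stdSimplex ℝ (Fin n)) (i : Fin m) :
    (max (rowPayoff M q i - expPayoff M p q) 0)^2
      ≤ (1 + m * (2 * ∑ i, ∑ j, |M i j|)) * (m * (2 * ∑ i, ∑ j, |M i j|))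
        * dist (pNext M p q) p := by
  set B := ∑ i, ∑ j, |M i j| with hBdef
  have hB : 0 ≤ B := Finset.sum_nonneg fun _ _ => Finset.sum_nonneg fun _ _ => abs_nonneg _
  set V := expPayoff M p q with hV
  set φ : Fin m → ℝ := fun k => max (rowPayoff M q k - V) 0 with hφdef
  have hφ0 : ∀ k, 0 ≤ φ k := fun k => le_max_right _ _
  have hrV : ∀ k : Fin m, |rowPayoff M q k - V| ≤ 2 * B := by
    intro k
    have h1 := abs_rowPayoff_le M q hq k
    have h2 := abs_expPayoff_le M p q hp hq
    have h3 : |rowPayoff M q k - V| ≤ |rowPayoff M q k| + |V| := abs_sub _ _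
    linarith
  have hφle : ∀ k, φ k ≤ 2 * B := fun k => max_le ((le_abs_self _).trans (hrV k)) (by positivity)
  have hSle : ∑ k, φ k ≤ m * (2 * B) := by
    calc ∑ k, φ k ≤ ∑ _k : Fin m, 2 * B := Finset.sum_le_sum fun k _ => hφle k
    _ = m * (2*B) := by simp [Finset.sum_const, Finset.card_univ, nsmul_eq_mul]
  have hS0 : (0:ℝ) ≤ ∑ k, φ k := Finset.sum_nonneg fun k _ => hφ0 k
  have hD0 : 0 ≤ dist (pNext M p q) p := dist_nonneg
  have hdiff : ∀ k, |pNext M p q k - p k| ≤ dist (pNext M p q) p := by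
    intro k; rw [← Real.dist_eq]; exact dist_le_pi_dist _ _ k
  have hkey := key_identity M p q hp.2
  have hstep : ∑ k, (pNext M p q k - p k) * (rowPayoff M q k - V)
      ≤ m * ((2*B) * dist (pNext M p q) p) := by
    calc ∑ k, (pNext M p q k - p k) * (rowPayoff M q k - V)
        ≤ ∑ _k : Fin m, (2*B) * dist (pNext M p q) p := by
          refine Finset.sum_le_sum fun k _ => ?_
          calc (pNext M p q k - p k) * (rowPayoff M q k - V)
              ≤ |(pNext M p q k - p k) * (rowPayoff M q k - V)| := le_abs_self _
          _ = |pNext M p q k - p k| * |rowPayoff M q k - V| := abs_mul _ _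
          _ ≤ dist (pNext M p q) p * (2*B) := mul_le_mul (hdiff k) (hrV k) (abs_nonneg _) hD0
          _ = (2*B) * dist (pNext M p q) p := mul_comm _ _
    _ = m * ((2*B) * dist (pNext M p q) p) := by
          simp [Finset.sum_const, Finset.card_univ, nsmul_eq_mul]
  have hX0 : (0:ℝ) ≤ ∑ k, (pNext M p q k - p k) * (rowPayoff M q k - V) := by
    by_contra h
    push_neg at h
    have hsq : (0:ℝ) ≤ ∑ k, (φ k)^2 := Finset.sum_nonneg fun k _ => sq_nonneg _
    nlinarith
  have hmono : (φ i)^2 ≤ ∑ k, (φ k)^2 :=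
    Finset.single_le_sum (f := fun k => (φ k)^2) (fun k _ => sq_nonneg _) (mem_univ i)
  have h1 : (1 + ∑ k, φ k) * (∑ k, (pNext M p q k - p k) * (rowPayoff M q k - V))
      ≤ (1 + m*(2*B)) * (∑ k, (pNext M p q k - p k) * (rowPayoff M q k - V)) :=
    mul_le_mul_of_nonneg_right (by linarith) hX0
  have h2 : (1 + (m:ℝ)*(2*B)) * (∑ k, (pNext M p q k - p k) * (rowPayoff M q k - V))
      ≤ (1 + m*(2*B)) * (m * ((2*B) * dist (pNext M p q) p)) :=
    mul_le_mul_of_nonneg_left hstep (by positivity)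
  calc (φ i)^2 ≤ ∑ k, (φ k)^2 := hmono
  _ = (1 + ∑ k, φ k) * ∑ k, (pNext M p q k - p k) * (rowPayoff M q k - V) := hkey
  _ ≤ (1 + m*(2*B)) * (m * ((2*B) * dist (pNext M p q) p)) := le_trans h1 h2
  _ = (1 + m * (2 * B)) * (m * (2 * B)) * dist (pNext M p q) p := by ring

lemma rowPayoff_neg {m n : ℕ} (M : Fin m → Fin n → ℝ) (p : Fin m → ℝ) (j : Fin n) :
    rowPayoff (fun j i => -M i j) p j = -colPayoff M p j := by
  unfold rowPayoff colPayoff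
  rw [← Finset.sum_neg_distrib]
  exact Finset.sum_congr rfl fun i _ => by ring

lemma expPayoff_neg {m n : ℕ} (M : Fin m → Fin n → ℝ) (p : Fin m → ℝ) (q : Fin n → ℝ) :
    expPayoff (fun j i => -M i j) q p = -expPayoff M p q := by
  unfold expPayoff
  rw [← Finset.sum_neg_distrib, Finset.sum_comm]
  refine Finset.sum_congr rfl fun i _ => ?_
  rw [← Finset.sum_neg_distrib]
  exact Finset.sum_congr rfl fun j _ => by ring

lemma psi_eq {m n : ℕ} (M : Fin m → Fin n → ℝ) (p : Fin m → ℝ) (q : Fin n → ℝ) (j : Fin n) :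
    max (expPayoff M p q - colPayoff M p j) 0
      = max (rowPayoff (fun j i => -M i j) p j - expPayoff (fun j i => -M i j) q p) 0 := by
  rw [rowPayoff_neg, expPayoff_neg]
  ring_nf

lemma qNext_eq {m n : ℕ} (M : Fin m → Fin n → ℝ) (p : Fin m → ℝ) (q : Fin n → ℝ) :
    qNext M p q = pNext (fun j i => -M i j) q p := by
  funext j
  unfold qNext pNext
  rw [psi_eq]
  congr 1
  congr 1
  exact Finset.sum_congr rfl fun k _ => psi_eq M p q k

theorem gamma_approx_fixed_iff {m n : ℕ} (hm : 0 < m) (hn : 0 < n)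
    (M : Fin m → Fin n → ℝ) (x : ℕ → (Fin m → ℝ) × (Fin n → ℝ))
    (hx : ∀ k, (x k).1 ∈ stdSimplex ℝ (Fin m) ∧ (x k).2 ∈ stdSimplex ℝ (Fin n)) :
    ((∀ i : Fin m, Tendsto
        (fun k => max (rowPayoff M (x k).2 i - expPayoff M (x k).1 (x k).2) 0) atTop (𝓝 0)) →
      (∀ j : Fin n, Tendsto
        (fun k => max (expPayoff M (x k).1 (x k).2 - colPayoff M (x k).1 j) 0) atTop (𝓝 0)) →
      Tendsto (fun k => dist (Gamma M (x k)) (x k)) atTop (𝓝 0)) ∧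
    (Tendsto (fun k => dist (Gamma M (x k)) (x k)) atTop (𝓝 0) →
      (∀ i : Fin m, Tendsto
        (fun k => max (rowPayoff M (x k).2 i - expPayoff M (x k).1 (x k).2) 0) atTop (𝓝 0)) ∧
      (∀ j : Fin n, Tendsto
        (fun k => max (expPayoff M (x k).1 (x k).2 - colPayoff M (x k).1 j) 0) atTop (𝓝 0))) := by
  set N : Fin n → Fin m → ℝ := fun j i => -M i j with hN
  -- notation
  set φ : Fin m → ℕ → ℝ :=
    fun i k => max (rowPayoff M (x k).2 i - expPayoff M (x k).1 (x k).2) 0 with hφdef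
  set ψ : Fin n → ℕ → ℝ :=
    fun j k => max (expPayoff M (x k).1 (x k).2 - colPayoff M (x k).1 j) 0 with hψdef
  have hψN : ∀ j k, ψ j k
      = max (rowPayoff N (x k).1 j - expPayoff N (x k).2 (x k).1) 0 :=
    fun j k => psi_eq M (x k).1 (x k).2 j
  have hdist : ∀ k, dist (Gamma M (x k)) (x k)
      = max (dist (pNext M (x k).1 (x k).2) (x k).1)
            (dist (pNext N (x k).2 (x k).1) (x k).2) := by
    intro k
    rw [Prod.dist_eq]
    congr 1
    rw [show (Gamma M (x k)).2 = qNext M (x k).1 (x k).2 from rfl, qNext_eq]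
  have hφ0 : ∀ i k, 0 ≤ φ i k := fun i k => le_max_right _ _
  have hψ0 : ∀ j k, 0 ≤ ψ j k := fun j k => le_max_right _ _
  constructor
  · intro hφt hψt
    have hS : Tendsto (fun k => ∑ i, φ i k) atTop (𝓝 0) := by
      have := tendsto_finset_sum (univ : Finset (Fin m)) (fun i _ => hφt i)
      simpa using this
    have hT : Tendsto (fun k => ∑ j, ψ j k) atTop (𝓝 0) := by
      have := tendsto_finset_sum (univ : Finset (Fin n)) (fun j _ => hψt j)
      simpa using this
    have hS0 : ∀ k, (0:ℝ) ≤ ∑ i, φ i k := fun k => Finset.sum_nonneg fun i _ => hφ0 i k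
    have hT0 : ∀ k, (0:ℝ) ≤ ∑ j, ψ j k := fun k => Finset.sum_nonneg fun j _ => hψ0 j k
    have hbound : ∀ k, dist (Gamma M (x k)) (x k)
        ≤ 2 * (∑ i, φ i k) + 2 * (∑ j, ψ j k) := by
      intro k
      rw [hdist k]
      have h1 : dist (pNext M (x k).1 (x k).2) (x k).1 ≤ 2 * ∑ i, φ i k := by
        rw [dist_pi_le_iff (by linarith [hS0 k])]
        intro i
        rw [Real.dist_eq]
        have := fwd_bound M (x k).1 (x k).2 (hx k).1 i
        have hle : φ i k ≤ ∑ i, φ i k :=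
          Finset.single_le_sum (f := fun i => φ i k) (fun i _ => hφ0 i k) (mem_univ i)
        calc |pNext M (x k).1 (x k).2 i - (x k).1 i| ≤ φ i k + ∑ i, φ i k := this
        _ ≤ 2 * ∑ i, φ i k := by linarith
      have h2 : dist (pNext N (x k).2 (x k).1) (x k).2 ≤ 2 * ∑ j, ψ j k := by
        rw [dist_pi_le_iff (by linarith [hT0 k])]
        intro j
        rw [Real.dist_eq]
        have := fwd_bound N (x k).2 (x k).1 (hx k).2 j
        simp_rw [← hψN] at this
        have hle : ψ j k ≤ ∑ j, ψ j k :=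
          Finset.single_le_sum (f := fun j => ψ j k) (fun j _ => hψ0 j k) (mem_univ j)
        calc |pNext N (x k).2 (x k).1 j - (x k).2 j| ≤ ψ j k + ∑ j, ψ j k := this
        _ ≤ 2 * ∑ j, ψ j k := by linarith
      exact max_le (by linarith [hT0 k]) (by linarith [hS0 k])
    have hlim : Tendsto (fun k => 2 * (∑ i, φ i k) + 2 * (∑ j, ψ j k)) atTop (𝓝 0) := by
      have := (hS.const_mul 2).add (hT.const_mul 2)
      simpa using this
    exact squeeze_zero (fun k => dist_nonneg) hbound hlim
  · intro hD
    constructor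
    · intro i
      set C : ℝ := (1 + m * (2 * ∑ i, ∑ j, |M i j|)) * (m * (2 * ∑ i, ∑ j, |M i j|)) with hC
      have hC0 : 0 ≤ C := by
        have hB : (0:ℝ) ≤ ∑ i, ∑ j, |M i j| :=
          Finset.sum_nonneg fun _ _ => Finset.sum_nonneg fun _ _ => abs_nonneg _
        positivity
      have hsq : Tendsto (fun k => (φ i k)^2) atTop (𝓝 0) := by
        refine squeeze_zero (g := fun k => C * dist (Gamma M (x k)) (x k))
          (fun k => sq_nonneg _) (fun k => ?_) ?_
        · calc (φ i k)^2 ≤ C * dist (pNext M (x k).1 (x k).2) (x k).1 :=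
              bwd_bound M (x k).1 (x k).2 (hx k).1 (hx k).2 i
          _ ≤ C * dist (Gamma M (x k)) (x k) := by
              refine mul_le_mul_of_nonneg_left ?_ hC0
              rw [hdist k]; exact le_max_left _ _
        · simpa using hD.const_mul C
      have : (fun k => φ i k) = fun k => Real.sqrt ((φ i k)^2) :=
        funext fun k => (Real.sqrt_sq (hφ0 i k)).symm
      rw [this]
      simpa using hsq.sqrt
    · intro j
      set C : ℝ := (1 + n * (2 * ∑ j, ∑ i, |N j i|)) * (n * (2 * ∑ j, ∑ i, |N j i|)) with hC
      have hC0 : 0 ≤ C := by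
        have hB : (0:ℝ) ≤ ∑ j, ∑ i, |N j i| :=
          Finset.sum_nonneg fun _ _ => Finset.sum_nonneg fun _ _ => abs_nonneg _
        positivity
      have hsq : Tendsto (fun k => (ψ j k)^2) atTop (𝓝 0) := by
        refine squeeze_zero (g := fun k => C * dist (Gamma M (x k)) (x k))
          (fun k => sq_nonneg _) (fun k => ?_) ?_
        · have hb := bwd_bound N (x k).2 (x k).1 (hx k).2 (hx k).1 j
          rw [← hψN] at hb
          calc (ψ j k)^2 ≤ C * dist (pNext N (x k).2 (x k).1) (x k).2 := hb
          _ ≤ C * dist (Gamma M (x k)) (x k) := by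
              refine mul_le_mul_of_nonneg_left ?_ hC0
              rw [hdist k]; exact le_max_right _ _
        · simpa using hD.const_mul C
      have : (fun k => ψ j k) = fun k => Real.sqrt ((ψ j k)^2) :=
        funext fun k => (Real.sqrt_sq (hψ0 j k)).symm
      rw [this]
      simpa using hsq.sqrt
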